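/- arXiv:2212.06020 — 2 statements merged into one kernel-verified Lean document; each statement's English description precedes it below -/
import Mathlib

section
/- Let G be a group of order greater than 2 acting sharply 2-transitively on a set X. Then there exist three elements of G that are pairwise non-conjugate; in particular G has at least three conjugacy classes. -/
/-- An involution of a group is an element of order 2. -/
def IsInvolution {G : Type*} [Monoid G] (g : G) : Prop := orderOf g = 2

/-- A group `G` acts sharply 2-transitively on `X` if `X` has at least two elements and
any pair of distinct points of `X` is sent to any other such pair by a unique element of `G`. -/
def SharplyTwoTransitive (G X : Type*) [Group G] [MulAction G X] : Prop :=
  Nontrivial X ∧ ∀ x₁ x₂ y₁ y₂ : X, x₁ ≠ x₂ → y₁ ≠ y₂ →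
    ∃! g : G, g • x₁ = y₁ ∧ g • x₂ = y₂

/-!
The identity, an involution and an element whose square is not the identity are pairwise
non-conjugate, since conjugation fixes the identity and commutes with squaring. Sharp
2-transitivity supplies the last two: the element exchanging two points `x ≠ y` is an involution,
and if `z` is a third point, the element sending `x ↦ y ↦ z` has a square moving `x`. The third
point exists because otherwise `g ↦ g • x` would embed `G` into the two-point set `X`.
-/

open Cardinal

theorem not_isConj_of_sq_eq_one_of_sq_ne_one {M : Type*} [Monoid M] {a b : M} (ha : a ^ 2 = 1)
    (hb : b ^ 2 ≠ 1) : ¬IsConj a b :=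
  fun h => hb (isConj_one_right.mp (ha ▸ h.pow 2))

theorem Cardinal.three_le_mk_of_ne {α : Type*} {a b c : α} (hab : a ≠ b) (hac : a ≠ c)
    (hbc : b ≠ c) : 3 ≤ #α := by
  classical
  have hcard : ({a, b, c} : Finset α).card = 3 :=
    Finset.card_eq_three.mpr ⟨a, b, c, hab, hac, hbc, rfl⟩
  calc (3 : Cardinal) = #(({a, b, c} : Finset α) : Set α) := by simp [hcard]
    _ ≤ #α := mk_set_le _

namespace SharplyTwoTransitive

variable {G X : Type*} [Group G] [MulAction G X]

theorem exists_smul_eq_smul_eq (h2t : SharplyTwoTransitive G X) {x₁ x₂ y₁ y₂ : X}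
    (hx : x₁ ≠ x₂) (hy : y₁ ≠ y₂) : ∃ g : G, g • x₁ = y₁ ∧ g • x₂ = y₂ :=
  (h2t.2 x₁ x₂ y₁ y₂ hx hy).exists

theorem eq_of_smul_eq_of_smul_eq (h2t : SharplyTwoTransitive G X) {x y : X} (hxy : x ≠ y)
    {g k : G} (hx : g • x = k • x) (hy : g • y = k • y) : g = k :=
  (h2t.2 x y (g • x) (g • y) hxy ((MulAction.injective g).ne hxy)).unique ⟨rfl, rfl⟩
    ⟨hx.symm, hy.symm⟩

theorem exists_ne_ne (h2t : SharplyTwoTransitive G X) (hG : 2 < #G) {x y : X} (hxy : x ≠ y) :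
    ∃ z : X, z ≠ x ∧ z ≠ y := by
  by_contra! hX
  have hX (z : X) : z = x ∨ z = y := or_iff_not_imp_left.mpr (hX z)
  have eq_of_ne_of_ne (a b c : X) : a ≠ c → b ≠ c → a = b := by
    rcases hX a with rfl | rfl <;> rcases hX b with rfl | rfl <;> rcases hX c with rfl | rfl <;>
      simp
  have hX_inj : Function.Injective fun z : X => z = x := by
    intro a b hab
    by_cases ha : a = x
    · exact ha.trans ((eq_iff_iff.mp hab).mp ha).symm
    · exact eq_of_ne_of_ne a b x ha fun hb => ha ((eq_iff_iff.mp hab).mpr hb)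
  have hG_inj : Function.Injective fun g : G => g • x := fun g k (hgk : g • x = k • x) =>
    h2t.eq_of_smul_eq_of_smul_eq hxy hgk <| eq_of_ne_of_ne _ _ (g • x)
      ((MulAction.injective g).ne hxy.symm) (hgk ▸ (MulAction.injective k).ne hxy.symm)
  have hle : #G ≤ 2 := by simpa using lift_mk_le'.mpr ⟨⟨_, hX_inj.comp hG_inj⟩⟩
  exact hle.not_gt hG

theorem exists_isInvolution (h2t : SharplyTwoTransitive G X) : ∃ t : G, IsInvolution t := by
  obtain ⟨x, y, hxy⟩ := h2t.1.exists_pair_ne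
  obtain ⟨t, htx, hty⟩ := h2t.exists_smul_eq_smul_eq hxy hxy.symm
  refine ⟨t, orderOf_eq_prime_iff.mpr ⟨?_, ?_⟩⟩
  · exact h2t.eq_of_smul_eq_of_smul_eq hxy (by simp [pow_two, mul_smul, htx, hty])
      (by simp [pow_two, mul_smul, htx, hty])
  · rintro rfl
    exact hxy (by simpa using htx)

theorem exists_ne_one_sq_ne_one (h2t : SharplyTwoTransitive G X) (hG : 2 < #G) :
    ∃ g : G, g ≠ 1 ∧ g ^ 2 ≠ 1 := by
  obtain ⟨x, y, hxy⟩ := h2t.1.exists_pair_ne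
  obtain ⟨z, hzx, hzy⟩ := h2t.exists_ne_ne hG hxy
  obtain ⟨g, hgx, hgy⟩ := h2t.exists_smul_eq_smul_eq hxy hzy.symm
  refine ⟨g, ?_, ?_⟩ <;> intro hg
  · exact hxy (by simpa [hg] using hgx)
  · exact hzx (by simpa [pow_two, mul_smul, hgx, hgy] using congr_arg (· • x) hg)

end SharplyTwoTransitive

/-- If a group `G` of order greater than 2 acts sharply 2-transitively on a set `X`, then `G`
contains three pairwise non-conjugate elements; in particular `G` has at least three
conjugacy classes. -/
theorem stmt_6 {G X : Type*} [Group G] [MulAction G X]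
    (h2t : SharplyTwoTransitive G X) (hG : 2 < Cardinal.mk G) :
    (∃ g₁ g₂ g₃ : G, ¬ IsConj g₁ g₂ ∧ ¬ IsConj g₁ g₃ ∧ ¬ IsConj g₂ g₃) ∧
    3 ≤ Cardinal.mk (ConjClasses G) := by
  obtain ⟨t, ht⟩ := h2t.exists_isInvolution
  obtain ⟨ht2, ht1⟩ := orderOf_eq_prime_iff.mp ht
  obtain ⟨g, hg1, hg2⟩ := h2t.exists_ne_one_sq_ne_one hG
  have h1t : ¬IsConj 1 t := isConj_one_right.not.mpr ht1
  have h1g : ¬IsConj 1 g := isConj_one_right.not.mpr hg1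
  have htg : ¬IsConj t g := not_isConj_of_sq_eq_one_of_sq_ne_one ht2 hg2
  exact ⟨⟨1, t, g, h1t, h1g, htg⟩, three_le_mk_of_ne (ConjClasses.mk_eq_mk_iff_isConj.not.mpr h1t)
    (ConjClasses.mk_eq_mk_iff_isConj.not.mpr h1g) (ConjClasses.mk_eq_mk_iff_isConj.not.mpr htg)⟩
end

section
/- Let G be a group acting sharply 2-transitively on a set X, with the action not of characteristic 2 (i.e., some involution of G has a fixed point in X). If u and v are two distinct involutions of G such that the element uv has finite order n, then n is a prime number. -/
/-!
All involutions of a sharply 2-transitive group are conjugate, and when they have fixed points,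
each point is fixed by exactly one involution. Hence any pair of distinct involutions `(i, j)` is
conjugate to any other such pair `(k, l)`: conjugate the fixed points of `i, j` to those of `k, l`.
So `i * j` has the same order `n` for all such pairs. On the other hand, if `t = u * v` has order
`n`, then `u` inverts `t`, so for every divisor `m ≠ 1` of `n` the element `u * t ^ (n / m)` is an
involution whose product with `u` has order `m`. Hence `m = n`.
-/

section Group

variable {G : Type*} [Group G] {u v : G}

theorem SemiconjBy.smul_eq_self {X : Type*} [MulAction G X] {g i j : G} (h : SemiconjBy g i j)
    {x : X} (hx : i • x = x) : j • g • x = g • x := by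
  rw [← mul_smul, ← h.eq, mul_smul, hx]

theorem isInvolution_iff_mul_self : IsInvolution u ↔ u * u = 1 ∧ u ≠ 1 := by
  rw [IsInvolution, orderOf_eq_prime_iff, pow_two]

namespace IsInvolution

theorem mul_self (hu : IsInvolution u) : u * u = 1 :=
  (isInvolution_iff_mul_self.mp hu).1

theorem ne_one (hu : IsInvolution u) : u ≠ 1 :=
  (isInvolution_iff_mul_self.mp hu).2

theorem inv_eq (hu : IsInvolution u) : u⁻¹ = u :=
  inv_eq_of_mul_eq_one_left hu.mul_self

theorem smul_smul {X : Type*} [MulAction G X] (hu : IsInvolution u) (x : X) : u • u • x = x := by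
  rw [← mul_smul, hu.mul_self, one_smul]

theorem semiconjBy_mul_inv (hu : IsInvolution u) (hv : IsInvolution v) :
    SemiconjBy u (u * v) (u * v)⁻¹ := by
  rw [SemiconjBy, mul_inv_rev, hu.inv_eq, hv.inv_eq, ← mul_assoc, hu.mul_self, one_mul, mul_assoc,
    hu.mul_self, mul_one]

theorem pow_ne_left (hu : IsInvolution u) (hv : IsInvolution v) (hsq : (u * v) ^ 2 ≠ 1) (k : ℕ) :
    (u * v) ^ k ≠ u := by
  intro hk
  have hcomm : u * (u * v) = (u * v) * u := by
    simpa only [hk] using (Commute.pow_self (u * v) k).eq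
  have hinv : u * v = (u * v)⁻¹ :=
    mul_right_cancel (hcomm.symm.trans (hu.semiconjBy_mul_inv hv).eq)
  exact hsq (by rw [pow_two]; nth_rewrite 2 [hinv]; exact mul_inv_cancel _)

/-- The witness is the reflection `u * (u * v) ^ (n / m)` of the dihedral group generated by
`u` and `v`, where `n` is the order of `u * v`. -/
theorem exists_isInvolution_orderOf_mul_eq (hu : IsInvolution u) (hv : IsInvolution v)
    (hsq : (u * v) ^ 2 ≠ 1) (hn : orderOf (u * v) ≠ 0) {m : ℕ} (hm : m ∣ orderOf (u * v))
    (hm1 : m ≠ 1) : ∃ w, IsInvolution w ∧ u ≠ w ∧ orderOf (u * w) = m := by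
  set t := u * v
  set s := t ^ (orderOf t / m)
  have hus : u * (u * s) = s := by rw [← mul_assoc, hu.mul_self, one_mul]
  have hs : orderOf s = m := orderOf_pow_orderOf_div hn hm
  have hsemi : u * s = s⁻¹ * u := by
    rw [← inv_pow]
    exact ((hu.semiconjBy_mul_inv hv).pow_right _).eq
  refine ⟨u * s, isInvolution_iff_mul_self.mpr ⟨?_, ?_⟩, ?_, by rw [hus, hs]⟩
  · nth_rewrite 1 [hsemi]
    rw [mul_assoc, hus, inv_mul_cancel]
  · intro h
    exact hu.pow_ne_left hv hsq _ ((eq_inv_of_mul_eq_one_right h).trans hu.inv_eq)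
  · intro h
    apply hm1
    rw [← hs, ← hus, ← h, hu.mul_self, orderOf_one]

end IsInvolution

end Group

namespace SharplyTwoTransitive

variable {G X : Type*} [Group G] [MulAction G X] (h2t : SharplyTwoTransitive G X)
include h2t

theorem eq_of_smul_eq_smul {g h : G} {x y : X} (hxy : x ≠ y) (hx : g • x = h • x)
    (hy : g • y = h • y) : g = h := by
  obtain ⟨w, -, hw⟩ := h2t.2 x y (h • x) (h • y) hxy ((MulAction.injective h).ne hxy)
  exact (hw g ⟨hx, hy⟩).trans (hw h ⟨rfl, rfl⟩).symm

theorem eq_one_of_smul_eq_self {g : G} {x y : X} (hxy : x ≠ y) (hx : g • x = x)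
    (hy : g • y = y) : g = 1 :=
  h2t.eq_of_smul_eq_smul hxy (by rw [hx, one_smul]) (by rw [hy, one_smul])

theorem exists_smul_ne {g : G} (hg : g ≠ 1) : ∃ y : X, g • y ≠ y := by
  by_contra! h
  obtain ⟨a, b, hab⟩ := h2t.1
  exact hg (h2t.eq_one_of_smul_eq_self hab (h a) (h b))

theorem exists_semiconjBy_smul_eq {i j : G} (hi : IsInvolution i) (hj : IsInvolution j)
    {p q : X} (hp : i • p ≠ p) (hq : j • q ≠ q) : ∃ g : G, SemiconjBy g i j ∧ g • p = q := by
  obtain ⟨g, ⟨hgp, hgip⟩, -⟩ := h2t.2 p (i • p) q (j • q) hp.symm hq.symm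
  refine ⟨g, h2t.eq_of_smul_eq_smul hp.symm ?_ ?_, hgp⟩
  · rw [mul_smul, mul_smul, hgp, hgip]
  · rw [mul_smul, mul_smul, hi.smul_smul, hgip, hgp, hj.smul_smul]

theorem exists_smul_eq_self_of_isInvolution
    (hchar : ∃ (u : G) (x : X), IsInvolution u ∧ u • x = x) {j : G} (hj : IsInvolution j) :
    ∃ x : X, j • x = x := by
  obtain ⟨u, x, hu, hux⟩ := hchar
  obtain ⟨p, hp⟩ := h2t.exists_smul_ne hu.ne_one
  obtain ⟨q, hq⟩ := h2t.exists_smul_ne hj.ne_one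
  obtain ⟨g, hg, -⟩ := h2t.exists_semiconjBy_smul_eq hu hj hp hq
  exact ⟨g • x, hg.smul_eq_self hux⟩

theorem eq_of_isInvolution_of_smul_eq_self {i j : G} (hi : IsInvolution i) (hj : IsInvolution j)
    {x : X} (hix : i • x = x) (hjx : j • x = x) : i = j := by
  have := h2t.1
  obtain ⟨y, hyx⟩ := exists_ne x
  have hiy : i • y ≠ y := fun h => hi.ne_one (h2t.eq_one_of_smul_eq_self hyx h hix)
  have hjy : j • y ≠ y := fun h => hj.ne_one (h2t.eq_one_of_smul_eq_self hyx h hjx)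
  obtain ⟨g, hg, hgy⟩ := h2t.exists_semiconjBy_smul_eq hi hj hiy hjy
  have hgx : g • x = x := by
    by_contra hgx
    exact hj.ne_one (h2t.eq_one_of_smul_eq_self hgx (hg.smul_eq_self hix) hjx)
  simpa [h2t.eq_one_of_smul_eq_self hyx hgy hgx] using hg.eq

theorem orderOf_mul_eq_orderOf_mul
    (hchar : ∃ (u : G) (x : X), IsInvolution u ∧ u • x = x) {i j k l : G}
    (hi : IsInvolution i) (hj : IsInvolution j) (hk : IsInvolution k) (hl : IsInvolution l)
    (hij : i ≠ j) (hkl : k ≠ l) : orderOf (i * j) = orderOf (k * l) := by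
  obtain ⟨a, ha⟩ := h2t.exists_smul_eq_self_of_isInvolution hchar hi
  obtain ⟨b, hb⟩ := h2t.exists_smul_eq_self_of_isInvolution hchar hj
  obtain ⟨c, hc⟩ := h2t.exists_smul_eq_self_of_isInvolution hchar hk
  obtain ⟨d, hd⟩ := h2t.exists_smul_eq_self_of_isInvolution hchar hl
  have hab : a ≠ b := fun h => hij (h2t.eq_of_isInvolution_of_smul_eq_self hi hj ha (h ▸ hb))
  have hcd : c ≠ d := fun h => hkl (h2t.eq_of_isInvolution_of_smul_eq_self hk hl hc (h ▸ hd))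
  obtain ⟨g, ⟨rfl, rfl⟩, -⟩ := h2t.2 a b c d hab hcd
  have hconj (x : G) : SemiconjBy g x (g * x * g⁻¹) := by simp [SemiconjBy]
  have hk' : k = g * i * g⁻¹ := h2t.eq_of_isInvolution_of_smul_eq_self hk
    ((hconj i).orderOf_eq.symm.trans hi) hc ((hconj i).smul_eq_self ha)
  have hl' : l = g * j * g⁻¹ := h2t.eq_of_isInvolution_of_smul_eq_self hl
    ((hconj j).orderOf_eq.symm.trans hj) hd ((hconj j).smul_eq_self hb)
  rw [hk', hl']
  exact ((hconj i).mul_right (hconj j)).orderOf_eq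

end SharplyTwoTransitive

/-- In a sharply 2-transitive group of characteristic different from 2, if the product of two
distinct involutions has finite order `n`, then `n` is prime. -/
theorem stmt_9 {G X : Type*} [Group G] [MulAction G X]
    (h2t : SharplyTwoTransitive G X)
    (hchar : ∃ (u : G) (x : X), IsInvolution u ∧ u • x = x)
    (u v : G) (hu : IsInvolution u) (hv : IsInvolution v) (huv : u ≠ v)
    (n : ℕ) (hn : n ≠ 0) (hord : orderOf (u * v) = n) :
    n.Prime := by
  subst hord
  have hn1 : orderOf (u * v) ≠ 1 := fun h =>
    huv ((eq_inv_of_mul_eq_one_right (orderOf_eq_one_iff.mp h)).trans hu.inv_eq).symm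
  by_contra hnp
  have hsq : (u * v) ^ 2 ≠ 1 := fun h => by
    rcases (Nat.dvd_prime Nat.prime_two).mp (orderOf_dvd_of_pow_eq_one h) with h1 | h2
    exacts [hn1 h1, hnp (h2 ▸ Nat.prime_two)]
  obtain ⟨m, hm, hm2, hmn⟩ := Nat.exists_dvd_of_not_prime2 (by omega) hnp
  obtain ⟨w, hw, huw, huw_ord⟩ :=
    hu.exists_isInvolution_orderOf_mul_eq hv hsq hn hm (by omega)
  have := h2t.orderOf_mul_eq_orderOf_mul hchar hu hv hu hw huv huw
  omega
end
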